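/- arXiv:hep-th/9712107 — 2 statements merged into one kernel-verified Lean document; each statement's English description precedes it below -/
import Mathlib

section
/- For all nonnegative integers m, q, an integer n, and a scalar h (in a commutative ring), the product ∏_{k=0}^{q-1} (m + h(n+1) + k·n) equals the sum over r from 0 to q of binomial(q, r) times (∏_{k=0}^{q-r-1} (m + k·n)) times (∏_{k=0}^{r-1} (h(n+1) + k·n)). -/
open Finset in
lemma aux_prod_shift {R : Type*} [CommRing R] (a b c : R) (q : ℕ) :
    ∏ k ∈ range q, (a + b + (k : R) * c) =
      ∑ r ∈ range (q + 1), (q.choose r : R) *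
        (∏ k ∈ range (q - r), (a + (k : R) * c)) *
        (∏ k ∈ range r, (b + (k : R) * c)) := by
  induction q with
  | zero => simp
  | succ q ih =>
    rw [prod_range_succ, ih, sum_mul]
    have key : ∀ r ∈ range (q + 1),
        (q.choose r : R) * (∏ k ∈ range (q - r), (a + (k : R) * c)) *
          (∏ k ∈ range r, (b + (k : R) * c)) * (a + b + (q : R) * c)
        = (q.choose r : R) * (∏ k ∈ range (q + 1 - r), (a + (k : R) * c)) *
            (∏ k ∈ range r, (b + (k : R) * c))
          + (q.choose r : R) * (∏ k ∈ range (q - r), (a + (k : R) * c)) *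
            (∏ k ∈ range (r + 1), (b + (k : R) * c)) := by
      intro r hr
      rw [mem_range] at hr
      have hr' : r ≤ q := Nat.lt_succ_iff.mp hr
      have h1 : q + 1 - r = (q - r) + 1 := by omega
      rw [h1, prod_range_succ, prod_range_succ]
      have h2 : ((q - r : ℕ) : R) = (q : R) - (r : R) := by
        rw [Nat.cast_sub hr']
      rw [h2]; ring
    rw [sum_congr rfl key, sum_add_distrib]
    have hS1 : ∑ r ∈ range (q + 1), (q.choose r : R) *
          (∏ k ∈ range (q + 1 - r), (a + (k : R) * c)) *
          (∏ k ∈ range r, (b + (k : R) * c))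
        = (∑ i ∈ range (q + 1), (q.choose (i + 1) : R) *
            (∏ k ∈ range (q - i), (a + (k : R) * c)) *
            (∏ k ∈ range (i + 1), (b + (k : R) * c)))
          + ∏ k ∈ range (q + 1), (a + (k : R) * c) := by
      rw [Finset.sum_range_succ']
      simp only [Nat.succ_sub_succ, Nat.choose_zero_right, Nat.cast_one, one_mul,
        prod_range_zero, mul_one, Nat.sub_zero]
      rw [Finset.sum_range_succ (fun i => (q.choose (i + 1) : R) *
            (∏ k ∈ range (q - i), (a + (k : R) * c)) *
            (∏ k ∈ range (i + 1), (b + (k : R) * c)))]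
      simp [Nat.choose_succ_self]
    rw [hS1]
    have hRHS : ∑ r ∈ range (q + 1 + 1), ((q + 1).choose r : R) *
          (∏ k ∈ range (q + 1 - r), (a + (k : R) * c)) *
          (∏ k ∈ range r, (b + (k : R) * c))
        = (∑ i ∈ range (q + 1), (q.choose (i + 1) : R) *
            (∏ k ∈ range (q - i), (a + (k : R) * c)) *
            (∏ k ∈ range (i + 1), (b + (k : R) * c)))
          + (∑ i ∈ range (q + 1), (q.choose i : R) *
            (∏ k ∈ range (q - i), (a + (k : R) * c)) *
            (∏ k ∈ range (i + 1), (b + (k : R) * c)))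
          + ∏ k ∈ range (q + 1), (a + (k : R) * c) := by
      rw [Finset.sum_range_succ']
      simp only [Nat.succ_sub_succ, Nat.choose_zero_right, Nat.cast_one, one_mul,
        prod_range_zero, mul_one, Nat.sub_zero, Nat.choose_succ_succ, Nat.cast_add]
      rw [← sum_add_distrib]
      congr 1
      apply sum_congr rfl
      intro i _
      ring
    rw [hRHS]
    have : ∑ i ∈ range (q + 1), (q.choose i : R) *
          (∏ k ∈ range (q - i), (a + (k : R) * c)) *
          (∏ k ∈ range (i + 1), (b + (k : R) * c))
        = ∑ r ∈ range (q + 1), (q.choose r : R) *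
          (∏ k ∈ range (q - r), (a + (k : R) * c)) *
          (∏ k ∈ range (r + 1), (b + (k : R) * c)) := rfl
    ring

/-- Key combinatorial identity (eq. indh): for nonnegative integers `m, q`, integer `n`
and `h` in a commutative ring,
`∏_{k=0}^{q-1} (m + h(n+1) + k·n)
  = ∑_{r=0}^{q} C(q,r) (∏_{k=0}^{q-r-1}(m + k·n)) (∏_{k=0}^{r-1}(h(n+1) + k·n))`. -/
theorem prod_shift_eq_sum_choose {R : Type*} [CommRing R] (h : R) (n : ℤ) (m q : ℕ) :
    ∏ k ∈ Finset.range q, ((m : R) + h * ((n : R) + 1) + (k : R) * (n : R)) =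
      ∑ r ∈ Finset.range (q + 1), (q.choose r : R) *
        (∏ k ∈ Finset.range (q - r), ((m : R) + (k : R) * (n : R))) *
        (∏ k ∈ Finset.range r, (h * ((n : R) + 1) + (k : R) * (n : R))) := by
  exact aux_prod_shift (m : R) (h * ((n : R) + 1)) (n : R) q
end

section
/- For a primary field transformation in the Virasoro case with n ≠ 0: applying the operator e^{λ(z^{n+1}∂_z + h(n+1)z^n)} to the constant function 1 yields, as a formal power series in λ, the series ∑_{j≥0} (λ^j/j!) z^{jn} ∏_{k=0}^{j-1}(h(n+1)+kn), which equals the binomial series expansion of (1 − nλz^n)^{−(n+1)h/n}. -/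
/-- Equation (id2) raised to the `h`-th power: applying
`e^{λ(z^{n+1}∂_z + h(n+1)zⁿ)}` to the constant function `1` gives
`∑_{j≥0} (λ^j/j!) z^{jn} ∏_{k=0}^{j-1}(h(n+1)+kn)`, which equals the generalized binomial
series of `(1 - nλzⁿ)^{-(n+1)h/n}`.  Laurent series in `z` are modelled by their
coefficient functions `ℤ → R`, on which the operator acts by
`(Dg)(m) = ((m-n) + h(n+1)) g(m-n)`; the first conjunct computes the `λ^j` coefficient
(times `j!`) of `e^{λD} 1`, and the second is the coefficient identity
`∏_{k=0}^{j-1}(h(n+1)+kn) = nʲ ∏_{k=0}^{j-1}((n+1)h/n + k)` identifying it with the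
binomial series. -/
theorem exp_flow_on_one {R : Type*} [CommRing R] [Algebra ℚ R] (n : ℤ) (hn : n ≠ 0)
    (h : R) :
    (∀ j : ℕ,
        (fun g : ℤ → R => fun m => (((m - n : ℤ) : R) + h * ((n : R) + 1)) * g (m - n))^[j]
            (fun m => if m = 0 then 1 else 0) =
          fun m => if m = j * n then
            ∏ k ∈ Finset.range j, (h * ((n : R) + 1) + (k : R) * (n : R)) else 0) ∧
    (∀ j : ℕ,
        ∏ k ∈ Finset.range j, (h * ((n : R) + 1) + (k : R) * (n : R)) =
          (n : R) ^ j *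
            ∏ k ∈ Finset.range j, ((((n : ℚ)⁻¹ * ((n : ℚ) + 1)) • h) + (k : R))) := by
  constructor
  · intro j
    induction j with
    | zero => simp
    | succ j ih =>
      rw [Function.iterate_succ_apply', ih]
      funext m
      simp only
      by_cases hm : m = (j + 1 : ℕ) * n
      · have h1 : m - n = (j : ℤ) * n := by
          rw [hm]; push_cast; ring
        rw [h1, if_pos rfl, if_pos hm, Finset.prod_range_succ]
        push_cast
        ring
      · have h2 : m - n ≠ (j : ℤ) * n := by
          intro hc
          apply hm
          have : m = (j : ℤ) * n + n := by linarith
          rw [this]; push_cast; ring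
        rw [if_neg h2, if_neg hm, mul_zero]
  · intro j
    have hn' : ((n : ℚ)) ≠ 0 := Int.cast_ne_zero.mpr hn
    have key : ∀ k : ℕ, (n : R) * ((((n : ℚ)⁻¹ * ((n : ℚ) + 1)) • h) + (k : R)) =
        h * ((n : R) + 1) + (k : R) * (n : R) := by
      intro k
      rw [Algebra.smul_def, ← map_intCast (algebraMap ℚ R) n, mul_add, ← mul_assoc,
        ← map_mul]
      have : (n : ℚ) * ((n : ℚ)⁻¹ * ((n : ℚ) + 1)) = (n : ℚ) + 1 := by field_simp
      rw [this, map_add, map_one, map_intCast]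
      ring
    calc ∏ k ∈ Finset.range j, (h * ((n : R) + 1) + (k : R) * (n : R))
        = ∏ k ∈ Finset.range j, (n : R) * ((((n : ℚ)⁻¹ * ((n : ℚ) + 1)) • h) + (k : R)) := by
          exact Finset.prod_congr rfl fun k _ => (key k).symm
      _ = (n : R) ^ j * ∏ k ∈ Finset.range j, ((((n : ℚ)⁻¹ * ((n : ℚ) + 1)) • h) + (k : R)) := by
          rw [Finset.prod_mul_distrib, Finset.prod_const, Finset.card_range]
end
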